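/- Let G be a finite connected graph with set of blocks 𝓑. Let (𝓘¹, α¹) and (𝓘², α²) be independent blocks inequalities with 𝓑⟨𝓘¹⟩ ∩ 𝓑⟨𝓘²⟩ = ∅ such that 𝓘¹ ∪ 𝓘² is an independent set of blocks. Let P ⊆ G be the unique block path connecting 𝓑⟨𝓘¹⟩ and 𝓑⟨𝓘²⟩ that contains no block of 𝓑⟨𝓘¹⟩ or 𝓑⟨𝓘²⟩, and let B' be a block of P. Define β by β_B = α¹_B if B ∈ 𝓑⟨𝓘¹⟩, β_B = α²_B if B ∈ 𝓑⟨𝓘²⟩, β_{B'} = −1, and β_B = 0 otherwise. Then (𝓘¹ ∪ 𝓘², β) is an independent blocks inequality. -/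

import Mathlib

/-!
The closures `𝓑⟨𝓘₁⟩` and `𝓑⟨𝓘₂⟩` are disjoint and `β` agrees with `α₁`, `α₂` on them, so for
`I ⊆ 𝓘₁ ∪ 𝓘₂` the sum of `β` over `𝓑⟨I⟩ ∖ (𝓘₁ ∪ 𝓘₂)` splits into an `α₁`-part, an `α₂`-part, and
`β_{B'} = -1` if `B' ∈ 𝓑⟨I⟩`. The `αⱼ`-part is at most `-(|I ∩ 𝓘ⱼ| - 1)` and at most `0`. If `I`
meets both `𝓘₁` and `𝓘₂`, then `B' ∈ 𝓑⟨I⟩`: a connected set of blocks containing `I`, glued to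
connected sets containing `𝓘₁` resp. `𝓘₂` that avoid `B'`, contains `𝓘₁ ∪ 𝓘₂` and hence `B'`.
Adding the two bounds then gives `-(|I| - 2)`, and the term `-1` makes up the difference; if `I`
misses `𝓘₁` or `𝓘₂`, the bound on the other part suffices.
-/

open Set

noncomputable section

namespace ConnectedBlocksPaper

variable {V : Type} [Fintype V] [DecidableEq V]

/-- A subgraph is 2-connected: at least 3 vertices and removing any vertex keeps it connected. -/
def IsTwoConnectedSub (G : SimpleGraph V) (H : G.Subgraph) : Prop :=
  3 ≤ H.verts.ncard ∧ ∀ v ∈ H.verts, (H.deleteVerts {v}).Connected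

/-- A block of `G`: a maximal 2-connected subgraph, or a bridge together with its two
incident vertices. -/
def IsBlock (G : SimpleGraph V) (B : G.Subgraph) : Prop :=
  (IsTwoConnectedSub G B ∧ ∀ B' : G.Subgraph, IsTwoConnectedSub G B' → B ≤ B' → B' = B)
  ∨ (∃ (u v : V) (h : G.Adj u v), G.IsBridge s(u, v) ∧ B = G.subgraphOfAdj h)

/-- The set `𝓑` of blocks of `G`, as a type. -/
abbrev Block (G : SimpleGraph V) := {B : G.Subgraph // IsBlock G B}

/-- The subgraph `G[𝓐]` induced by a set of blocks. -/
def blockUnion (G : SimpleGraph V) (𝓐 : Set (Block G)) : G.Subgraph :=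
  ⨆ B ∈ 𝓐, (B : G.Subgraph)

/-- `G[𝓐]` is connected (the empty set of blocks counts as connected). -/
def ConnBlocks (G : SimpleGraph V) (𝓐 : Set (Block G)) : Prop :=
  𝓐 = ∅ ∨ (blockUnion G 𝓐).Connected

/-- The incidence vector `χ^𝓐 ∈ {0,1}^𝓑` of a set of blocks `𝓐 ⊆ 𝓑`. -/
def incVec (G : SimpleGraph V) (𝓐 : Set (Block G)) : Block G → ℝ :=
  Set.indicator 𝓐 1

/-- The connected blocks polytope `CBP(G) ⊆ ℝ^𝓑`. -/
def CBP (G : SimpleGraph V) : Set (Block G → ℝ) :=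
  convexHull ℝ {x | ∃ 𝓐 : Set (Block G), ConnBlocks G 𝓐 ∧ x = incVec G 𝓐}

/-- `F` is a face of the convex set `P`. -/
def IsFaceOf {E : Type*} [AddCommGroup E] [Module ℝ E] (P F : Set E) : Prop :=
  F ⊆ P ∧ Convex ℝ F ∧
    ∀ x ∈ P, ∀ y ∈ P, ∀ t : ℝ, 0 < t → t < 1 →
      t • x + (1 - t) • y ∈ F → x ∈ F ∧ y ∈ F

/-- The dimension of a polytope: the dimension of its affine hull. -/
def polyDim {E : Type*} [AddCommGroup E] [Module ℝ E] (P : Set E) : ℕ :=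
  Module.finrank ℝ (affineSpan ℝ P).direction

/-- A facet is a face of dimension `dim P - 1`. -/
def IsFacetOf {E : Type*} [AddCommGroup E] [Module ℝ E] (P F : Set E) : Prop :=
  IsFaceOf P F ∧ polyDim F = polyDim P - 1

/-- `v` is a cut vertex of `G`: deleting `v` from the connected graph `G` leaves more than
one component. -/
def IsCutVertex (G : SimpleGraph V) (v : V) : Prop :=
  ¬ (G.induce ({v}ᶜ : Set V)).Preconnected

/-- `𝓑⟨𝓐⟩`: the smallest set of blocks inducing a connected subgraph and containing `𝓐`. -/
def blockClosure (G : SimpleGraph V) (𝓐 : Set (Block G)) : Set (Block G) :=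
  ⋂₀ {𝓒 : Set (Block G) | 𝓐 ⊆ 𝓒 ∧ ConnBlocks G 𝓒}

/-- An independent set of blocks: no two blocks share a common vertex. -/
def IndepBlocks (G : SimpleGraph V) (𝓘 : Set (Block G)) : Prop :=
  ∀ B₁ ∈ 𝓘, ∀ B₂ ∈ 𝓘, B₁ ≠ B₂ →
    ((B₁ : G.Subgraph).verts ∩ (B₂ : G.Subgraph).verts) = ∅

/-- `(𝓘, α)` is an independent blocks inequality. -/
def IsIBI (G : SimpleGraph V) (𝓘 : Set (Block G)) (α : Block G → ℤ) : Prop :=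
  IndepBlocks G 𝓘 ∧
  (∀ B, B ∉ blockClosure G 𝓘 → α B = 0) ∧
  (∀ B ∈ 𝓘, α B = 1) ∧
  (∀ B ∈ blockClosure G 𝓘 \ 𝓘, α B ≤ 0) ∧
  (∑ᶠ B ∈ blockClosure G 𝓘 \ 𝓘, α B = -((𝓘.ncard : ℤ) - 1)) ∧
  (∀ I ⊆ 𝓘, ∑ᶠ B ∈ blockClosure G I \ 𝓘, α B ≤ -((I.ncard : ℤ) - 1))

/-- `𝓑[H]`: the set of blocks (of `G`) of the subgraph `H`. -/
def blocksOf (G : SimpleGraph V) (H : G.Subgraph) : Set (Block G) :=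
  {B : Block G | (B : G.Subgraph) ≤ H}

/-- `𝒦_v`: the components of `G - v` with `v` (and its incident edges) added back. -/
def Kv (G : SimpleGraph V) (v : V) : Set G.Subgraph :=
  {H | ∃ C : (G.induce ({v}ᶜ : Set V)).ConnectedComponent,
        H = (⊤ : G.Subgraph).induce (Subtype.val '' C.supp ∪ {v})}

/-- A polytope is simple if every vertex lies in exactly `dim P` facets. -/
def IsSimplePolytope {E : Type*} [AddCommGroup E] [Module ℝ E] (P : Set E) : Prop :=
  ∀ x ∈ P.extremePoints ℝ, {F : Set E | IsFacetOf P F ∧ x ∈ F}.ncard = polyDim P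

/-- A simplex: the convex hull of an affinely independent finite set. -/
def IsSimplex {E : Type*} [AddCommGroup E] [Module ℝ E] (F : Set E) : Prop :=
  ∃ s : Finset E, AffineIndependent ℝ ((↑) : s → E) ∧ F = convexHull ℝ (s : Set E)

/-- A polytope is simplicial if every facet is a simplex. -/
def IsSimplicialPolytope {E : Type*} [AddCommGroup E] [Module ℝ E] (P : Set E) : Prop :=
  ∀ F : Set E, IsFacetOf P F → IsSimplex F

/-- The graph of a polytope: extreme points, adjacent when they span a 1-dimensional face. -/
def polyGraph {E : Type*} [AddCommGroup E] [Module ℝ E] (P : Set E) : SimpleGraph E where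
  Adj x y := x ≠ y ∧ x ∈ P.extremePoints ℝ ∧ y ∈ P.extremePoints ℝ ∧
    IsFaceOf P (segment ℝ x y) ∧ polyDim (segment ℝ x y) = 1
  symm := by
    constructor
    rintro x y ⟨hxy, hx, hy, hF, hd⟩
    exact ⟨hxy.symm, hy, hx, by rwa [segment_symm], by rwa [segment_symm]⟩
  loopless := by constructor; rintro x ⟨h, -⟩; exact h rfl

end ConnectedBlocksPaper

section Finsum

variable {α M : Type*} [AddCommMonoid M] {f : α → M} {S s t u : Set α}

theorem finsum_mem_eq_inter_add_inter_add_inter (hS : S.Finite) (hst : Disjoint s t)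
    (hsu : Disjoint s u) (htu : Disjoint t u) (hf : ∀ x ∈ S, x ∉ s → x ∉ t → x ∉ u → f x = 0) :
    ∑ᶠ x ∈ S, f x = ∑ᶠ x ∈ S ∩ s, f x + ∑ᶠ x ∈ S ∩ t, f x + ∑ᶠ x ∈ S ∩ u, f x := by
  have hzero : ∑ᶠ x ∈ S \ (s ∪ t ∪ u), f x = 0 := finsum_mem_of_eqOn_zero fun x hx => by
    simp only [mem_sdiff, mem_union, not_or] at hx
    exact hf x hx.1 hx.2.1.1 hx.2.1.2 hx.2.2
  rw [← finsum_mem_inter_add_sdiff (s ∪ t ∪ u) hS, hzero, add_zero, inter_union_distrib_left,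
    inter_union_distrib_left, finsum_mem_union _ ((hS.inter_of_left _).union (hS.inter_of_left _))
      (hS.inter_of_left _), finsum_mem_union _ (hS.inter_of_left _) (hS.inter_of_left _)]
  · exact hst.mono inter_subset_right inter_subset_right
  · exact (hsu.union_left htu).mono (union_subset_union inter_subset_right inter_subset_right)
      inter_subset_right

variable [PartialOrder M] [IsOrderedAddMonoid M]

theorem finsum_mem_nonpos (h : ∀ x ∈ s, f x ≤ 0) : ∑ᶠ x ∈ s, f x ≤ 0 :=
  finsum_mem_induction (· ≤ 0) le_rfl (fun _ _ => add_nonpos) h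

theorem finsum_mem_le_finsum_mem_of_subset (hst : s ⊆ t) (ht : t.Finite)
    (h : ∀ x ∈ t \ s, f x ≤ 0) : ∑ᶠ x ∈ t, f x ≤ ∑ᶠ x ∈ s, f x := by
  rw [← finsum_mem_add_sdiff hst ht]
  exact add_le_of_nonpos_right (finsum_mem_nonpos h)

end Finsum

namespace ConnectedBlocksPaper

variable {V : Type} {G : SimpleGraph V} {𝓐 𝓒 I 𝓘 𝓘₁ 𝓘₂ : Set (Block G)} {B B' : Block G}

theorem Block.verts_nonempty (B : Block G) : (B : G.Subgraph).verts.Nonempty := by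
  rcases B.2 with ⟨⟨h3, -⟩, -⟩ | ⟨u, v, h, -, hB⟩
  · exact nonempty_of_ncard_ne_zero (by omega)
  · exact hB ▸ ⟨u, by simp⟩

theorem le_blockUnion (h : B ∈ 𝓐) : (B : G.Subgraph) ≤ blockUnion G 𝓐 :=
  le_biSup (fun B : Block G => (B : G.Subgraph)) h

theorem ConnBlocks.union (h𝓐 : ConnBlocks G 𝓐) (h𝓒 : ConnBlocks G 𝓒) (hB𝓐 : B ∈ 𝓐)
    (hB𝓒 : B ∈ 𝓒) : ConnBlocks G (𝓐 ∪ 𝓒) := by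
  have connected {𝓓 : Set (Block G)} (h : ConnBlocks G 𝓓) (hB : B ∈ 𝓓) :
      (blockUnion G 𝓓).Connected :=
    h.resolve_left (nonempty_of_mem hB).ne_empty
  right
  rw [blockUnion, iSup_union]
  obtain ⟨v, hv⟩ := B.verts_nonempty
  exact SimpleGraph.Subgraph.connected_sup (connected h𝓐 hB𝓐).preconnected
    (connected h𝓒 hB𝓒).preconnected ⟨v, (le_blockUnion hB𝓐).1 hv, (le_blockUnion hB𝓒).1 hv⟩

theorem mem_blockClosure : B ∈ blockClosure G 𝓐 ↔ ∀ 𝓒, 𝓐 ⊆ 𝓒 → ConnBlocks G 𝓒 → B ∈ 𝓒 := by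
  simp [blockClosure]

theorem subset_blockClosure (𝓐 : Set (Block G)) : 𝓐 ⊆ blockClosure G 𝓐 :=
  fun _ hB => mem_blockClosure.2 fun _ h _ => h hB

theorem blockClosure_mono (h : 𝓐 ⊆ 𝓒) : blockClosure G 𝓐 ⊆ blockClosure G 𝓒 :=
  fun _ hB => mem_blockClosure.2 fun 𝓓 h𝓓 hc => mem_blockClosure.1 hB 𝓓 (h.trans h𝓓) hc

theorem mem_blockClosure_of_inter_nonempty (hB' : B' ∈ blockClosure G (𝓘₁ ∪ 𝓘₂))
    (hB'₁ : B' ∉ blockClosure G 𝓘₁) (hB'₂ : B' ∉ blockClosure G 𝓘₂) (hI₁ : (I ∩ 𝓘₁).Nonempty)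
    (hI₂ : (I ∩ 𝓘₂).Nonempty) : B' ∈ blockClosure G I := by
  obtain ⟨B₁, hB₁I, hB₁⟩ := hI₁
  obtain ⟨B₂, hB₂I, hB₂⟩ := hI₂
  simp only [mem_blockClosure, not_forall] at hB'₁ hB'₂
  obtain ⟨𝓒₁, hs₁, hc₁, hn₁⟩ := hB'₁
  obtain ⟨𝓒₂, hs₂, hc₂, hn₂⟩ := hB'₂
  refine mem_blockClosure.2 fun 𝓒 hI hc => ?_
  have hglued : ConnBlocks G (𝓒 ∪ 𝓒₁ ∪ 𝓒₂) :=
    (hc.union hc₁ (hI hB₁I) (hs₁ hB₁)).union hc₂ (Or.inl (hI hB₂I)) (hs₂ hB₂)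
  have hcover : 𝓘₁ ∪ 𝓘₂ ⊆ 𝓒 ∪ 𝓒₁ ∪ 𝓒₂ :=
    union_subset (hs₁.trans (subset_union_right.trans subset_union_left))
      (hs₂.trans subset_union_right)
  rcases mem_blockClosure.1 hB' _ hcover hglued with (h | h) | h
  exacts [h, absurd h hn₁, absurd h hn₂]

namespace IsIBI

variable {α : Block G → ℤ}

theorem apply_nonpos (h : IsIBI G 𝓘 α) (hB : B ∉ 𝓘) : α B ≤ 0 := by
  by_cases hcl : B ∈ blockClosure G 𝓘
  · exact h.2.2.2.1 B ⟨hcl, hB⟩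
  · exact (h.2.1 B hcl).le

theorem finsum_nonpos (h : IsIBI G 𝓘 α) (hS : Disjoint 𝓐 𝓘) : ∑ᶠ B ∈ 𝓐, α B ≤ 0 :=
  finsum_mem_nonpos fun _ hB => h.apply_nonpos (hS.notMem_of_mem_left hB)

theorem finsum_inter_blockClosure_le [Finite V] (h : IsIBI G 𝓘 α) (I : Set (Block G)) :
    ∑ᶠ B ∈ (blockClosure G I ∩ blockClosure G 𝓘) \ 𝓘, α B ≤ -(((I ∩ 𝓘).ncard : ℤ) - 1) := by
  have hsub : blockClosure G (I ∩ 𝓘) \ 𝓘 ⊆ (blockClosure G I ∩ blockClosure G 𝓘) \ 𝓘 :=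
    sdiff_subset_sdiff_left
      (subset_inter (blockClosure_mono inter_subset_left) (blockClosure_mono inter_subset_right))
  exact (finsum_mem_le_finsum_mem_of_subset hsub (toFinite _)
    fun _ hB => h.apply_nonpos hB.1.2).trans (h.2.2.2.2.2 _ inter_subset_right)

end IsIBI

variable {α₁ α₂ β : Block G → ℤ}

theorem apply_nonpos_of_split (h₁ : IsIBI G 𝓘₁ α₁) (h₂ : IsIBI G 𝓘₂ α₂)
    (hβ₁ : ∀ B ∈ blockClosure G 𝓘₁, β B = α₁ B) (hβ₂ : ∀ B ∈ blockClosure G 𝓘₂, β B = α₂ B)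
    (hβ' : β B' = -1)
    (hβ₀ : ∀ B, B ∉ blockClosure G 𝓘₁ → B ∉ blockClosure G 𝓘₂ → B ≠ B' → β B = 0)
    (hB : B ∉ 𝓘₁ ∪ 𝓘₂) : β B ≤ 0 := by
  rw [mem_union, not_or] at hB
  by_cases hB₁ : B ∈ blockClosure G 𝓘₁
  · exact hβ₁ B hB₁ ▸ h₁.apply_nonpos hB.1
  by_cases hB₂ : B ∈ blockClosure G 𝓘₂
  · exact hβ₂ B hB₂ ▸ h₂.apply_nonpos hB.2
  by_cases hBB' : B = B'
  · exact hBB' ▸ hβ'.trans_le (by norm_num)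
  · exact (hβ₀ B hB₁ hB₂ hBB').le

open Classical in
theorem finsum_blockClosure_sdiff_split [Finite V]
    (hdisj : Disjoint (blockClosure G 𝓘₁) (blockClosure G 𝓘₂))
    (hB'₁ : B' ∉ blockClosure G 𝓘₁) (hB'₂ : B' ∉ blockClosure G 𝓘₂)
    (hβ₁ : ∀ B ∈ blockClosure G 𝓘₁, β B = α₁ B) (hβ₂ : ∀ B ∈ blockClosure G 𝓘₂, β B = α₂ B)
    (hβ' : β B' = -1)
    (hβ₀ : ∀ B, B ∉ blockClosure G 𝓘₁ → B ∉ blockClosure G 𝓘₂ → B ≠ B' → β B = 0)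
    (I : Set (Block G)) :
    ∑ᶠ B ∈ blockClosure G I \ (𝓘₁ ∪ 𝓘₂), β B =
      ∑ᶠ B ∈ (blockClosure G I ∩ blockClosure G 𝓘₁) \ 𝓘₁, α₁ B +
      ∑ᶠ B ∈ (blockClosure G I ∩ blockClosure G 𝓘₂) \ 𝓘₂, α₂ B +
      if B' ∈ blockClosure G I then -1 else 0 := by
  have h₁₂ : ∀ B ∈ blockClosure G 𝓘₁, B ∉ 𝓘₂ :=
    fun B hB h => hdisj.notMem_of_mem_left hB (subset_blockClosure _ h)
  have h₂₁ : ∀ B ∈ blockClosure G 𝓘₂, B ∉ 𝓘₁ :=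
    fun B hB h => hdisj.notMem_of_mem_right hB (subset_blockClosure _ h)
  have hB'𝓘 : B' ∉ 𝓘₁ ∪ 𝓘₂ := by
    rintro (h | h)
    exacts [hB'₁ (subset_blockClosure _ h), hB'₂ (subset_blockClosure _ h)]
  rw [finsum_mem_eq_inter_add_inter_add_inter (toFinite _) hdisj
    (disjoint_singleton_right.2 hB'₁) (disjoint_singleton_right.2 hB'₂)
    fun B _ h₁ h₂ h' => hβ₀ B h₁ h₂ h']
  congr 1
  · congr 1
    · refine finsum_mem_congr ?_ fun B hB => hβ₁ B hB.1.2
      ext B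
      have := h₁₂ B
      simp only [mem_inter_iff, mem_sdiff, mem_union]
      tauto
    · refine finsum_mem_congr ?_ fun B hB => hβ₂ B hB.1.2
      ext B
      have := h₂₁ B
      simp only [mem_inter_iff, mem_sdiff, mem_union]
      tauto
  · split_ifs with h
    · rw [inter_singleton_of_mem (show B' ∈ _ \ _ from ⟨h, hB'𝓘⟩), finsum_mem_singleton, hβ']
    · rw [inter_singleton_eq_empty.2 fun h' => h h'.1, finsum_mem_empty]

open Classical in
theorem finsum_split_le_ncard [Finite V] (h₁ : IsIBI G 𝓘₁ α₁) (h₂ : IsIBI G 𝓘₂ α₂)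
    (hdisj : Disjoint (blockClosure G 𝓘₁) (blockClosure G 𝓘₂))
    (hB' : B' ∈ blockClosure G (𝓘₁ ∪ 𝓘₂))
    (hB'₁ : B' ∉ blockClosure G 𝓘₁) (hB'₂ : B' ∉ blockClosure G 𝓘₂) (hI : I ⊆ 𝓘₁ ∪ 𝓘₂) :
    ∑ᶠ B ∈ (blockClosure G I ∩ blockClosure G 𝓘₁) \ 𝓘₁, α₁ B +
      ∑ᶠ B ∈ (blockClosure G I ∩ blockClosure G 𝓘₂) \ 𝓘₂, α₂ B +
      (if B' ∈ blockClosure G I then -1 else 0) ≤ -((I.ncard : ℤ) - 1) := by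
  have hcard : I.ncard = (I ∩ 𝓘₁).ncard + (I ∩ 𝓘₂).ncard := by
    have h𝓘 : Disjoint 𝓘₁ 𝓘₂ := hdisj.mono (subset_blockClosure _) (subset_blockClosure _)
    rw [← ncard_union_eq (h𝓘.mono inter_subset_right inter_subset_right),
      ← inter_union_distrib_left, inter_eq_left.2 hI]
  have hpath : B' ∉ blockClosure G I → (I ∩ 𝓘₁).ncard = 0 ∨ (I ∩ 𝓘₂).ncard = 0 := by
    contrapose!
    exact fun ⟨hn₁, hn₂⟩ => mem_blockClosure_of_inter_nonempty hB' hB'₁ hB'₂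
      (nonempty_of_ncard_ne_zero hn₁) (nonempty_of_ncard_ne_zero hn₂)
  have b₁ := h₁.finsum_inter_blockClosure_le I
  have b₂ := h₂.finsum_inter_blockClosure_le I
  have b₁' := h₁.finsum_nonpos (𝓐 := (blockClosure G I ∩ blockClosure G 𝓘₁) \ 𝓘₁)
    disjoint_sdiff_left
  have b₂' := h₂.finsum_nonpos (𝓐 := (blockClosure G I ∩ blockClosure G 𝓘₂) \ 𝓘₂)
    disjoint_sdiff_left
  split_ifs with h
  · omega
  · have := hpath h
    omega

end ConnectedBlocksPaper

namespace ConnectedBlocksPaper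

variable {V : Type} [Fintype V] [DecidableEq V]

/-- The blocks of the connecting block path are exactly
`𝓑⟨𝓘¹ ∪ 𝓘²⟩ ∖ (𝓑⟨𝓘¹⟩ ∪ 𝓑⟨𝓘²⟩)`. -/
theorem ibi_combine_general (G : SimpleGraph V)
    (𝓘₁ 𝓘₂ : Set (Block G)) (α₁ α₂ : Block G → ℤ)
    (h₁ : IsIBI G 𝓘₁ α₁) (h₂ : IsIBI G 𝓘₂ α₂)
    (hdisj : blockClosure G 𝓘₁ ∩ blockClosure G 𝓘₂ = ∅)
    (hind : IndepBlocks G (𝓘₁ ∪ 𝓘₂))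
    (B' : Block G)
    (hB' : B' ∈ blockClosure G (𝓘₁ ∪ 𝓘₂) \ (blockClosure G 𝓘₁ ∪ blockClosure G 𝓘₂))
    (β : Block G → ℤ)
    (hβ₁ : ∀ B ∈ blockClosure G 𝓘₁, β B = α₁ B)
    (hβ₂ : ∀ B ∈ blockClosure G 𝓘₂, β B = α₂ B)
    (hβ' : β B' = -1)
    (hβ₀ : ∀ B, B ∉ blockClosure G 𝓘₁ → B ∉ blockClosure G 𝓘₂ → B ≠ B' → β B = 0) :
    IsIBI G (𝓘₁ ∪ 𝓘₂) β := by
  obtain ⟨hB'cl, hB'out⟩ := hB'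
  rw [mem_union, not_or] at hB'out
  obtain ⟨hB'₁, hB'₂⟩ := hB'out
  have hdisj' := disjoint_iff_inter_eq_empty.2 hdisj
  have hcl₁ : blockClosure G 𝓘₁ ⊆ blockClosure G (𝓘₁ ∪ 𝓘₂) := blockClosure_mono subset_union_left
  have hcl₂ : blockClosure G 𝓘₂ ⊆ blockClosure G (𝓘₁ ∪ 𝓘₂) := blockClosure_mono subset_union_right
  have hsplit := finsum_blockClosure_sdiff_split hdisj' hB'₁ hB'₂ hβ₁ hβ₂ hβ' hβ₀
  refine ⟨hind, fun B hB => ?_, ?_, fun B hB => apply_nonpos_of_split h₁ h₂ hβ₁ hβ₂ hβ' hβ₀ hB.2,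
    ?_, fun I hI => hsplit I ▸ finsum_split_le_ncard h₁ h₂ hdisj' hB'cl hB'₁ hB'₂ hI⟩
  · exact hβ₀ B (fun h => hB (hcl₁ h)) (fun h => hB (hcl₂ h)) (by rintro rfl; exact hB hB'cl)
  · obtain ⟨-, -, hone₁, -, -, -⟩ := h₁
    obtain ⟨-, -, hone₂, -, -, -⟩ := h₂
    rintro B (hB | hB)
    · exact (hβ₁ B (subset_blockClosure _ hB)).trans (hone₁ B hB)
    · exact (hβ₂ B (subset_blockClosure _ hB)).trans (hone₂ B hB)
  · obtain ⟨-, -, -, -, hsum₁, -⟩ := h₁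
    obtain ⟨-, -, -, -, hsum₂, -⟩ := h₂
    rw [hsplit, inter_eq_right.2 hcl₁, inter_eq_right.2 hcl₂, if_pos hB'cl, hsum₁, hsum₂,
      ncard_union_eq (hdisj'.mono (subset_blockClosure _) (subset_blockClosure _))]
    push_cast
    ring

/-- combining two independent blocks inequalities with disjoint closures along a
block `B'` of the connecting block path (the blocks of the connecting path are exactly
`𝓑⟨𝓘¹ ∪ 𝓘²⟩ ∖ (𝓑⟨𝓘¹⟩ ∪ 𝓑⟨𝓘²⟩)`) yields an independent blocks inequality. -/
theorem ibi_combine (G : SimpleGraph V) (hG : G.Connected)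
    (𝓘₁ 𝓘₂ : Set (Block G)) (α₁ α₂ : Block G → ℤ)
    (h₁ : IsIBI G 𝓘₁ α₁) (h₂ : IsIBI G 𝓘₂ α₂)
    (hdisj : blockClosure G 𝓘₁ ∩ blockClosure G 𝓘₂ = ∅)
    (hind : IndepBlocks G (𝓘₁ ∪ 𝓘₂))
    (B' : Block G)
    (hB' : B' ∈ blockClosure G (𝓘₁ ∪ 𝓘₂) \ (blockClosure G 𝓘₁ ∪ blockClosure G 𝓘₂))
    (β : Block G → ℤ)
    (hβ₁ : ∀ B ∈ blockClosure G 𝓘₁, β B = α₁ B)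
    (hβ₂ : ∀ B ∈ blockClosure G 𝓘₂, β B = α₂ B)
    (hβ' : β B' = -1)
    (hβ₀ : ∀ B, B ∉ blockClosure G 𝓘₁ → B ∉ blockClosure G 𝓘₂ → B ≠ B' → β B = 0) :
    IsIBI G (𝓘₁ ∪ 𝓘₂) β :=
  ibi_combine_general G 𝓘₁ 𝓘₂ α₁ α₂ h₁ h₂ hdisj hind B' hB' β hβ₁ hβ₂ hβ' hβ₀

end ConnectedBlocksPaper
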